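/- arXiv:1404.4020 — 6 statements merged into one kernel-verified Lean document; each statement's English description precedes it below -/
import Mathlib

section
/- Let κ ≥ 3 be an integer, a, b, c ∈ ℂ, and let g, r ∈ Fin κ be distinct colors. Define h : Fin κ → Fin κ → Fin κ → ℂ by h(u,v,w) = a if u = v = w, h(u,v,w) = c if u, v, w are pairwise distinct, and h(u,v,w) = b otherwise. Then Σ_{i,j ∈ Fin κ} h(g,i,j)·h(i,j,r) = 2ab + κb² + 4(κ-2)bc + (κ-2)(κ-3)c². -/
/-! Group the double sum by the colour `i` of the first internal edge. For fixed `i`, the summand depends on `j` only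
through which of `g`, `r`, `i` it equals, so each row is a few explicit terms plus a constant times
the number of remaining colours; the rows `i = g`, `i = r` and the `κ - 2` equal rows `i ∉ {g, r}`
then add up to the stated polynomial. -/

open Finset

section ConstantOffFinset

variable {α R : Type*} [Fintype α] [CommRing R]

theorem Finset.sum_univ_eq_sum_add_card_compl_mul (s : Finset α) (f : α → R) (C : R)
    (hf : ∀ x ∉ s, f x = C) :
    ∑ x, f x = ∑ x ∈ s, f x + ((Fintype.card α : R) - #s) * C := by
  classical
  rw [← sum_add_sum_compl s f, sum_congr rfl fun x hx => hf x (mem_compl.mp hx), sum_const,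
    card_compl, nsmul_eq_mul, Nat.cast_sub (card_le_univ s)]

theorem Finset.sum_univ_eq_add_add_card_sub_two_mul {x y : α} (hxy : x ≠ y) (f : α → R) (C : R)
    (hf : ∀ z, z ≠ x → z ≠ y → f z = C) :
    ∑ z, f z = f x + f y + ((Fintype.card α : R) - 2) * C := by
  classical
  rw [sum_univ_eq_sum_add_card_compl_mul {x, y} f C (by simpa using hf), sum_pair hxy,
    card_pair hxy, Nat.cast_ofNat]

theorem Finset.sum_univ_eq_add_add_add_card_sub_three_mul {x y z : α} (hxy : x ≠ y) (hxz : x ≠ z)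
    (hyz : y ≠ z) (f : α → R) (C : R) (hf : ∀ w, w ≠ x → w ≠ y → w ≠ z → f w = C) :
    ∑ w, f w = f x + f y + f z + ((Fintype.card α : R) - 3) * C := by
  classical
  have hx : x ∉ ({y, z} : Finset α) := by simp [hxy, hxz]
  rw [sum_univ_eq_sum_add_card_compl_mul {x, y, z} f C (by simpa using hf), sum_insert hx,
    sum_pair hyz, card_insert_of_notMem hx, card_pair hyz, ← add_assoc]
  norm_num

end ConstantOffFinset

theorem stmt_4_general (κ : ℕ) (a b c : ℂ) (g r : Fin κ) (hgr : g ≠ r)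
    (h : Fin κ → Fin κ → Fin κ → ℂ)
    (hh : ∀ u v w, h u v w =
      if u = v ∧ v = w then a
      else if u ≠ v ∧ v ≠ w ∧ u ≠ w then c
      else b) :
    ∑ i : Fin κ, ∑ j : Fin κ, h g i j * h i j r
      = 2 * a * b + (κ : ℂ) * b ^ 2 + 4 * ((κ : ℂ) - 2) * b * c
        + ((κ : ℂ) - 2) * ((κ : ℂ) - 3) * c ^ 2 := by
  have row_g : ∑ j, h g g j * h g j r = a * b + b * b + ((κ : ℂ) - 2) * (b * c) := by
    rw [sum_univ_eq_add_add_card_sub_two_mul hgr _ (b * c) fun j hjg hjr => ?_]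
    · simp [hh, hgr, Fintype.card_fin]
    · simp [hh, hgr, hjr, Ne.symm hjg]
  have row_r : ∑ j, h g r j * h r j r = b * b + b * a + ((κ : ℂ) - 2) * (c * b) := by
    rw [sum_univ_eq_add_add_card_sub_two_mul hgr _ (c * b) fun j hjg hjr => ?_]
    · simp [hh, hgr, hgr.symm, Fintype.card_fin]
    · simp [hh, hgr, hjr, Ne.symm hjg, Ne.symm hjr]
  have row_other : ∀ i, i ≠ g → i ≠ r →
      ∑ j, h g i j * h i j r = b * c + c * b + b * b + ((κ : ℂ) - 3) * (c * c) := by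
    intro i hig hir
    rw [sum_univ_eq_add_add_add_card_sub_three_mul hgr (Ne.symm hig) (Ne.symm hir) _ (c * c)
      fun j hjg hjr hji => ?_]
    · simp [hh, hgr, hig, hir, Ne.symm hig, Fintype.card_fin]
    · simp [hh, hir, hjr, Ne.symm hig, Ne.symm hjg, Ne.symm hji]
  rw [sum_univ_eq_add_add_card_sub_two_mul hgr _ _ row_other, row_g, row_r, Fintype.card_fin]
  ring

theorem stmt_4 (κ : ℕ) (hκ : 3 ≤ κ) (a b c : ℂ) (g r : Fin κ) (hgr : g ≠ r)
    (h : Fin κ → Fin κ → Fin κ → ℂ)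
    (hh : ∀ u v w, h u v w =
      if u = v ∧ v = w then a
      else if u ≠ v ∧ v ≠ w ∧ u ≠ w then c
      else b) :
    ∑ i : Fin κ, ∑ j : Fin κ, h g i j * h i j r
      = 2 * a * b + (κ : ℂ) * b ^ 2 + 4 * ((κ : ℂ) - 2) * b * c
        + ((κ : ℂ) - 2) * ((κ : ℂ) - 3) * c ^ 2 :=
  stmt_4_general κ a b c g r hgr h hh
end

section
/- Let κ ≥ 3 be an integer and a, b, c ∈ ℂ. With h the symmetric ternary signature on Fin κ (a if all three arguments equal, c if pairwise distinct, b otherwise), for any color g ∈ Fin κ: Σ_{i,j,k ∈ Fin κ} h(g,i,j)·h(j,k,g)·h(i,g,k) — equivalently the triangle gadget with all three external edges assigned g — equals a³ + 3(κ-1)ab² + 4(κ-1)b³ + 3(κ-1)(κ-2)(b²c + bc²) + (κ-1)(κ-2)(κ-3)c³. -/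
/-! Every sum over a free colour splits into the colours already named (`g` and the other
summation indices fixed so far), where the signature is read off case by case, and the remaining
colours, on each of which the summand takes the same value; counting those gives the factors
`κ - 1`, `κ - 2`, `κ - 3`. -/

open Finset

theorem Finset.sum_univ_eq_sum_add_mul_of_notMem {α R : Type*} [Fintype α] [DecidableEq α]
    [Ring R] (s : Finset α) (f : α → R) (C : R) (hf : ∀ x ∉ s, f x = C) :
    ∑ x, f x = ∑ x ∈ s, f x + (Fintype.card α - #s) * C := by
  rw [← sum_add_sum_compl s f, sum_congr rfl fun x hx => hf x (mem_compl.1 hx), sum_const,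
    card_compl, nsmul_eq_mul, Nat.cast_sub (card_le_univ s)]

section TriangleGadget

variable {α R : Type*} [Fintype α] [DecidableEq α] [CommRing R] (a b c : R)

/-- The symmetric domain-invariant ternary signature `⟨a, b, c⟩`. -/
def ternSig (u v w : α) : R :=
  if u = v ∧ v = w then a else if u ≠ v ∧ v ≠ w ∧ u ≠ w then c else b

local notation "κ" => (Fintype.card α : R)

variable (g : α)

def triangleEdgeSum (i j : α) : R := ∑ k, ternSig a b c j k g * ternSig a b c i g k

variable {a b c}

theorem triangleEdgeSum_self : triangleEdgeSum a b c g g g = a * a + (κ - 1) * (b * b) := by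
  rw [triangleEdgeSum, sum_univ_eq_sum_add_mul_of_notMem {g} _ (b * b)]
  · simp [ternSig]
  · intro k hk
    have hk : k ≠ g := by simpa using hk
    simp [ternSig, hk, hk.symm]

theorem triangleEdgeSum_left {j : α} (hj : j ≠ g) :
    triangleEdgeSum a b c g g j = a * b + b * b + (κ - 2) * (c * b) := by
  rw [triangleEdgeSum, sum_univ_eq_sum_add_mul_of_notMem {g, j} _ (c * b)]
  · simp [sum_pair hj.symm, card_pair hj.symm, ternSig, hj, hj.symm]
    ring
  · intro k hk
    obtain ⟨hkg, hkj⟩ : k ≠ g ∧ k ≠ j := by simpa [not_or] using hk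
    simp [ternSig, hj, hkg, hkg.symm, hkj.symm]

theorem triangleEdgeSum_right {i : α} (hi : i ≠ g) :
    triangleEdgeSum a b c g i g = a * b + b * b + (κ - 2) * (b * c) := by
  rw [triangleEdgeSum, sum_univ_eq_sum_add_mul_of_notMem {g, i} _ (b * c)]
  · simp [sum_pair hi.symm, card_pair hi.symm, ternSig, hi, hi.symm]
  · intro k hk
    obtain ⟨hkg, hki⟩ : k ≠ g ∧ k ≠ i := by simpa [not_or] using hk
    simp [ternSig, hi, hkg, hkg.symm, hki.symm]

theorem triangleEdgeSum_diag {i : α} (hi : i ≠ g) :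
    triangleEdgeSum a b c g i i = 2 * (b * b) + (κ - 2) * (c * c) := by
  rw [triangleEdgeSum, sum_univ_eq_sum_add_mul_of_notMem {g, i} _ (c * c)]
  · simp [sum_pair hi.symm, card_pair hi.symm, ternSig, hi, hi.symm]
    ring
  · intro k hk
    obtain ⟨hkg, hki⟩ : k ≠ g ∧ k ≠ i := by simpa [not_or] using hk
    simp [ternSig, hi, hkg, hkg.symm, hki.symm]

theorem triangleEdgeSum_of_pairwise_ne {i j : α} (hi : i ≠ g) (hj : j ≠ g) (hij : i ≠ j) :
    triangleEdgeSum a b c g i j = b * b + 2 * (b * c) + (κ - 3) * (c * c) := by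
  rw [triangleEdgeSum, sum_univ_eq_sum_add_mul_of_notMem {g, i, j} _ (c * c)]
  · have hg : g ∉ ({i, j} : Finset α) := by simp [hi.symm, hj.symm]
    simp [sum_insert hg, card_insert_of_notMem hg, sum_pair hij, card_pair hij, ternSig,
      hi, hj, hij, hi.symm, hj.symm, hij.symm]
    ring
  · intro k hk
    obtain ⟨hkg, hki, hkj⟩ : k ≠ g ∧ k ≠ i ∧ k ≠ j := by simpa [not_or] using hk
    simp [ternSig, hi, hj, hkg, hkg.symm, hki.symm, hkj.symm]

theorem sum_ternSig_mul_triangleEdgeSum_self :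
    ∑ j, ternSig a b c g g j * triangleEdgeSum a b c g g j
      = a * (a * a + (κ - 1) * (b * b))
        + (κ - 1) * (b * (a * b + b * b + (κ - 2) * (c * b))) := by
  rw [sum_univ_eq_sum_add_mul_of_notMem {g} _ (b * (a * b + b * b + (κ - 2) * (c * b)))]
  · simp [triangleEdgeSum_self, ternSig]
  · intro j hj
    have hj : j ≠ g := by simpa using hj
    simp [triangleEdgeSum_left g hj, ternSig, hj.symm]

theorem sum_ternSig_mul_triangleEdgeSum_of_ne {i : α} (hi : i ≠ g) :
    ∑ j, ternSig a b c g i j * triangleEdgeSum a b c g i j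
      = b * (a * b + b * b + (κ - 2) * (b * c)) + b * (2 * (b * b) + (κ - 2) * (c * c))
        + (κ - 2) * (c * (b * b + 2 * (b * c) + (κ - 3) * (c * c))) := by
  rw [sum_univ_eq_sum_add_mul_of_notMem {g, i} _
    (c * (b * b + 2 * (b * c) + (κ - 3) * (c * c)))]
  · simp [sum_pair hi.symm, card_pair hi.symm, triangleEdgeSum_right g hi,
      triangleEdgeSum_diag g hi, ternSig, hi, hi.symm]
  · intro j hj
    obtain ⟨hjg, hji⟩ : j ≠ g ∧ j ≠ i := by simpa [not_or] using hj
    simp [triangleEdgeSum_of_pairwise_ne g hi hjg hji.symm, ternSig, hi.symm, hjg.symm, hji.symm]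

theorem sum_ternSig_triangle :
    ∑ i, ∑ j, ∑ k, ternSig a b c g i j * ternSig a b c j k g * ternSig a b c i g k
      = a ^ 3 + 3 * (κ - 1) * a * b ^ 2 + 4 * (κ - 1) * b ^ 3
        + 3 * (κ - 1) * (κ - 2) * (b ^ 2 * c + b * c ^ 2)
        + (κ - 1) * (κ - 2) * (κ - 3) * c ^ 3 := by
  have h_inner (i j : α) : ∑ k, ternSig a b c g i j * ternSig a b c j k g * ternSig a b c i g k
      = ternSig a b c g i j * triangleEdgeSum a b c g i j := by
    simp only [triangleEdgeSum, mul_sum, mul_assoc]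
  simp only [h_inner]
  rw [sum_univ_eq_sum_add_mul_of_notMem {g} _ _ fun i hi =>
    sum_ternSig_mul_triangleEdgeSum_of_ne g (by simpa using hi)]
  simp only [sum_singleton, sum_ternSig_mul_triangleEdgeSum_self, card_singleton, Nat.cast_one]
  ring

end TriangleGadget

theorem stmt_8_general (κ : ℕ) (a b c : ℂ) (g : Fin κ)
    (h : Fin κ → Fin κ → Fin κ → ℂ)
    (hh : ∀ u v w, h u v w =
      if u = v ∧ v = w then a
      else if u ≠ v ∧ v ≠ w ∧ u ≠ w then c
      else b) :
    ∑ i : Fin κ, ∑ j : Fin κ, ∑ k : Fin κ, h g i j * h j k g * h i g k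
      = a ^ 3 + 3 * ((κ : ℂ) - 1) * a * b ^ 2 + 4 * ((κ : ℂ) - 1) * b ^ 3
        + 3 * ((κ : ℂ) - 1) * ((κ : ℂ) - 2) * (b ^ 2 * c + b * c ^ 2)
        + ((κ : ℂ) - 1) * ((κ : ℂ) - 2) * ((κ : ℂ) - 3) * c ^ 3 := by
  obtain rfl : h = ternSig a b c := funext₃ hh
  simpa using sum_ternSig_triangle (a := a) (b := b) (c := c) g

theorem stmt_8 (κ : ℕ) (hκ : 3 ≤ κ) (a b c : ℂ) (g : Fin κ)
    (h : Fin κ → Fin κ → Fin κ → ℂ)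
    (hh : ∀ u v w, h u v w =
      if u = v ∧ v = w then a
      else if u ≠ v ∧ v ≠ w ∧ u ≠ w then c
      else b) :
    ∑ i : Fin κ, ∑ j : Fin κ, ∑ k : Fin κ, h g i j * h j k g * h i g k
      = a ^ 3 + 3 * ((κ : ℂ) - 1) * a * b ^ 2 + 4 * ((κ : ℂ) - 1) * b ^ 3
        + 3 * ((κ : ℂ) - 1) * ((κ : ℂ) - 2) * (b ^ 2 * c + b * c ^ 2)
        + ((κ : ℂ) - 1) * ((κ : ℂ) - 2) * ((κ : ℂ) - 3) * c ^ 3 :=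
  stmt_8_general κ a b c g h hh
end

section
/- Let κ ≥ 3 be an integer and a, b, c ∈ ℂ with a - 3b + 2c = 0. Define a' = a³ + 3(κ-1)ab² + 4(κ-1)b³ + 3(κ-1)(κ-2)(b²c + bc²) + (κ-1)(κ-2)(κ-3)c³, b' = a²b + 4ab² + 2(κ-2)abc + (κ-2)ac² + (5κ-7)b³ + (κ-2)(κ+5)b²c + (κ-2)(7κ-18)bc² + (κ-2)(κ-3)²c³, and c' = 3ab² + 6abc + 3(κ-3)ac² + (κ+5)b³ + 3(7κ-18)b²c + 9(κ-3)²bc² + (κ³-9κ²+29κ-32)c³. Then a' = 3b' - 2c'. -/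
theorem stmt_9_general (κ : ℕ) (a b c : ℂ) (hA : a - 3 * b + 2 * c = 0)
    (a' b' c' : ℂ)
    (ha' : a' = a ^ 3 + 3 * ((κ : ℂ) - 1) * a * b ^ 2 + 4 * ((κ : ℂ) - 1) * b ^ 3
      + 3 * ((κ : ℂ) - 1) * ((κ : ℂ) - 2) * (b ^ 2 * c + b * c ^ 2)
      + ((κ : ℂ) - 1) * ((κ : ℂ) - 2) * ((κ : ℂ) - 3) * c ^ 3)
    (hb' : b' = a ^ 2 * b + 4 * a * b ^ 2 + 2 * ((κ : ℂ) - 2) * a * b * c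
      + ((κ : ℂ) - 2) * a * c ^ 2 + (5 * (κ : ℂ) - 7) * b ^ 3
      + ((κ : ℂ) - 2) * ((κ : ℂ) + 5) * b ^ 2 * c
      + ((κ : ℂ) - 2) * (7 * (κ : ℂ) - 18) * b * c ^ 2
      + ((κ : ℂ) - 2) * ((κ : ℂ) - 3) ^ 2 * c ^ 3)
    (hc' : c' = 3 * a * b ^ 2 + 6 * a * b * c + 3 * ((κ : ℂ) - 3) * a * c ^ 2
      + ((κ : ℂ) + 5) * b ^ 3 + 3 * (7 * (κ : ℂ) - 18) * b ^ 2 * c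
      + 9 * ((κ : ℂ) - 3) ^ 2 * b * c ^ 2
      + ((κ : ℂ) ^ 3 - 9 * (κ : ℂ) ^ 2 + 29 * (κ : ℂ) - 32) * c ^ 3) :
    a' = 3 * b' - 2 * c' := by
  have ha : a = 3 * b - 2 * c := by linear_combination hA
  subst ha ha' hb' hc'
  ring

theorem stmt_9 (κ : ℕ) (hκ : 3 ≤ κ) (a b c : ℂ) (hA : a - 3 * b + 2 * c = 0)
    (a' b' c' : ℂ)
    (ha' : a' = a ^ 3 + 3 * ((κ : ℂ) - 1) * a * b ^ 2 + 4 * ((κ : ℂ) - 1) * b ^ 3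
      + 3 * ((κ : ℂ) - 1) * ((κ : ℂ) - 2) * (b ^ 2 * c + b * c ^ 2)
      + ((κ : ℂ) - 1) * ((κ : ℂ) - 2) * ((κ : ℂ) - 3) * c ^ 3)
    (hb' : b' = a ^ 2 * b + 4 * a * b ^ 2 + 2 * ((κ : ℂ) - 2) * a * b * c
      + ((κ : ℂ) - 2) * a * c ^ 2 + (5 * (κ : ℂ) - 7) * b ^ 3
      + ((κ : ℂ) - 2) * ((κ : ℂ) + 5) * b ^ 2 * c
      + ((κ : ℂ) - 2) * (7 * (κ : ℂ) - 18) * b * c ^ 2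
      + ((κ : ℂ) - 2) * ((κ : ℂ) - 3) ^ 2 * c ^ 3)
    (hc' : c' = 3 * a * b ^ 2 + 6 * a * b * c + 3 * ((κ : ℂ) - 3) * a * c ^ 2
      + ((κ : ℂ) + 5) * b ^ 3 + 3 * (7 * (κ : ℂ) - 18) * b ^ 2 * c
      + 9 * ((κ : ℂ) - 3) ^ 2 * b * c ^ 2
      + ((κ : ℂ) ^ 3 - 9 * (κ : ℂ) ^ 2 + 29 * (κ : ℂ) - 32) * c ^ 3) :
    a' = 3 * b' - 2 * c' :=
  stmt_9_general κ a b c hA a' b' c' ha' hb' hc'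
end

section
/- Let κ ≥ 3 be an integer and a, b, c, x, y ∈ ℂ with a = 3b - 2c. Then the quantity b' = a(x²y + xy² + (κ-2)y³) + b(x³ + κx²y + (7κ-12)xy² + (3κ²-11κ+11)y³) + c(κ-2)(2x²y + (3κ-7)xy² + (κ²-4κ+5)y³) factors as b' = (x + (κ-1)y)·(bx² + 2(2b + (κ-3)c)xy + ((3κ-5)b + (κ²-5κ+6)c)y²). -/
theorem stmt_14_general (κ : ℕ) (a b c x y : ℂ) (hA : a = 3 * b - 2 * c) :
    a * (x ^ 2 * y + x * y ^ 2 + ((κ : ℂ) - 2) * y ^ 3)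
      + b * (x ^ 3 + (κ : ℂ) * x ^ 2 * y + (7 * (κ : ℂ) - 12) * x * y ^ 2
        + (3 * (κ : ℂ) ^ 2 - 11 * (κ : ℂ) + 11) * y ^ 3)
      + c * ((κ : ℂ) - 2) * (2 * x ^ 2 * y + (3 * (κ : ℂ) - 7) * x * y ^ 2
        + ((κ : ℂ) ^ 2 - 4 * (κ : ℂ) + 5) * y ^ 3)
    = (x + ((κ : ℂ) - 1) * y)
      * (b * x ^ 2 + 2 * (2 * b + ((κ : ℂ) - 3) * c) * x * y
        + ((3 * (κ : ℂ) - 5) * b + ((κ : ℂ) ^ 2 - 5 * (κ : ℂ) + 6) * c) * y ^ 2) := by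
  subst hA
  ring

theorem stmt_14 (κ : ℕ) (hκ : 3 ≤ κ) (a b c x y : ℂ) (hA : a = 3 * b - 2 * c) :
    a * (x ^ 2 * y + x * y ^ 2 + ((κ : ℂ) - 2) * y ^ 3)
      + b * (x ^ 3 + (κ : ℂ) * x ^ 2 * y + (7 * (κ : ℂ) - 12) * x * y ^ 2
        + (3 * (κ : ℂ) ^ 2 - 11 * (κ : ℂ) + 11) * y ^ 3)
      + c * ((κ : ℂ) - 2) * (2 * x ^ 2 * y + (3 * (κ : ℂ) - 7) * x * y ^ 2
        + ((κ : ℂ) ^ 2 - 4 * (κ : ℂ) + 5) * y ^ 3)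
    = (x + ((κ : ℂ) - 1) * y)
      * (b * x ^ 2 + 2 * (2 * b + ((κ : ℂ) - 3) * c) * x * y
        + ((3 * (κ : ℂ) - 5) * b + ((κ : ℂ) ^ 2 - 5 * (κ : ℂ) + 6) * c) * y ^ 2) :=
  stmt_14_general κ a b c x y hA
end

section
/- Let κ ≥ 3 be an integer and a, b, c, x, y ∈ ℂ with a = 3b - 2c. Then the quantity c' = a(3xy² + (κ-3)y³) + 3b(2x²y + (3κ-7)xy² + (κ²-4κ+5)y³) + c(x³ + 3(κ-3)x²y + 3(κ²-5κ+7)xy² + (κ³-6κ²+14κ-13)y³) factors as c' = (x + (κ-1)y)·(cx² + 2(3b + (κ-4)c)xy + ((3κ-6)b + (κ²-5κ+7)c)y²). -/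
theorem stmt_15_general (κ : ℕ) (a b c x y : ℂ) (hA : a = 3 * b - 2 * c) :
    a * (3 * x * y ^ 2 + ((κ : ℂ) - 3) * y ^ 3)
      + 3 * b * (2 * x ^ 2 * y + (3 * (κ : ℂ) - 7) * x * y ^ 2
        + ((κ : ℂ) ^ 2 - 4 * (κ : ℂ) + 5) * y ^ 3)
      + c * (x ^ 3 + 3 * ((κ : ℂ) - 3) * x ^ 2 * y
        + 3 * ((κ : ℂ) ^ 2 - 5 * (κ : ℂ) + 7) * x * y ^ 2
        + ((κ : ℂ) ^ 3 - 6 * (κ : ℂ) ^ 2 + 14 * (κ : ℂ) - 13) * y ^ 3)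
    = (x + ((κ : ℂ) - 1) * y)
      * (c * x ^ 2 + 2 * (3 * b + ((κ : ℂ) - 4) * c) * x * y
        + ((3 * (κ : ℂ) - 6) * b + ((κ : ℂ) ^ 2 - 5 * (κ : ℂ) + 7) * c) * y ^ 2) := by
  subst hA
  ring

theorem stmt_15 (κ : ℕ) (hκ : 3 ≤ κ) (a b c x y : ℂ) (hA : a = 3 * b - 2 * c) :
    a * (3 * x * y ^ 2 + ((κ : ℂ) - 3) * y ^ 3)
      + 3 * b * (2 * x ^ 2 * y + (3 * (κ : ℂ) - 7) * x * y ^ 2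
        + ((κ : ℂ) ^ 2 - 4 * (κ : ℂ) + 5) * y ^ 3)
      + c * (x ^ 3 + 3 * ((κ : ℂ) - 3) * x ^ 2 * y
        + 3 * ((κ : ℂ) ^ 2 - 5 * (κ : ℂ) + 7) * x * y ^ 2
        + ((κ : ℂ) ^ 3 - 6 * (κ : ℂ) ^ 2 + 14 * (κ : ℂ) - 13) * y ^ 3)
    = (x + ((κ : ℂ) - 1) * y)
      * (c * x ^ 2 + 2 * (3 * b + ((κ : ℂ) - 4) * c) * x * y
        + ((3 * (κ : ℂ) - 6) * b + ((κ : ℂ) ^ 2 - 5 * (κ : ℂ) + 7) * c) * y ^ 2) :=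
  stmt_15_general κ a b c x y hA
end

section
/- Let κ ≥ 3 be an integer and a, b, c ∈ ℂ, and let t₁ ≠ t₂ in Fin κ. With M(t) the matrix defined by M(t)_{i,j} = a if i = j = t; b if i = j ≠ t or (i ≠ j and (i = t or j = t)); c otherwise, we have tr(M(t₁)·M(t₂)) = 2ab + κb² + 4(κ-2)bc + (κ-2)(κ-3)c². -/
/-!
Split every sum over the index set into the two pinned indices `t₁`, `t₂` and the `n - 2`
remaining ones. Row `t₁` of `M(t₁) M(t₂)` contributes `ab + b² + (n - 2)bc` to the trace, row `t₂`
symmetrically `ab + b² + (n - 2)bc`, and each of the `n - 2` remaining rows contributes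
`2bc + b² + (n - 3)c²`, since there the diagonal is `b` and the other unpinned entries are `c`.
-/

open Finset

variable {ι R : Type*} [Fintype ι] [DecidableEq ι] [CommRing R]

def pinnedMatrix (a b c : R) (t : ι) : Matrix ι ι R :=
  Matrix.of fun i j =>
    if i = j ∧ j = t then a
    else if i = j ∨ (i = t ∨ j = t) then b
    else c

section SumPair

variable {t₁ t₂ : ι}

theorem sum_univ_eq_add_add_sum_compl_pair {M : Type*} [AddCommMonoid M] (ht : t₁ ≠ t₂)
    (f : ι → M) : ∑ i, f i = f t₁ + f t₂ + ∑ i ∈ {t₁, t₂}ᶜ, f i := by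
  rw [← sum_add_sum_compl {t₁, t₂}, sum_pair ht]

theorem cast_card_compl_pair (ht : t₁ ≠ t₂) :
    (#({t₁, t₂}ᶜ : Finset ι) : R) = Fintype.card ι - 2 := by
  have h := card_compl_add_card ({t₁, t₂} : Finset ι)
  rw [card_pair ht] at h
  rw [← h]
  push_cast
  ring

theorem mem_compl_pair {i : ι} : i ∈ ({t₁, t₂}ᶜ : Finset ι) ↔ i ≠ t₁ ∧ i ≠ t₂ := by
  simp

theorem sum_compl_pair_ite_eq (ht : t₁ ≠ t₂) {i : ι} (hi : i ∈ ({t₁, t₂}ᶜ : Finset ι)) (x y : R) :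
    ∑ j ∈ {t₁, t₂}ᶜ, (if i = j then x else y) = x + ((Fintype.card ι : R) - 3) * y := by
  have hsplit : ∀ j, (if i = j then x else y) = y + if i = j then x - y else 0 := by
    intro j; split_ifs <;> ring
  simp only [hsplit, sum_add_distrib, sum_const, sum_ite_eq, if_pos hi, nsmul_eq_mul,
    cast_card_compl_pair ht]
  ring

end SumPair

section PinnedMatrix

variable {a b c : R} {t₁ t₂ : ι}

theorem sum_pinnedMatrix_mul_pinnedMatrix_row_left (ht : t₁ ≠ t₂) :
    ∑ j, pinnedMatrix a b c t₁ t₁ j * pinnedMatrix a b c t₂ j t₁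
      = a * b + b * b + ((Fintype.card ι : R) - 2) * (b * c) := by
  have hrest : ∀ j ∈ ({t₁, t₂}ᶜ : Finset ι),
      pinnedMatrix a b c t₁ t₁ j * pinnedMatrix a b c t₂ j t₁ = b * c := by
    intro j hj
    obtain ⟨hj₁, hj₂⟩ := mem_compl_pair.1 hj
    simp [pinnedMatrix, hj₁, hj₂, Ne.symm hj₁, ht]
  rw [sum_univ_eq_add_add_sum_compl_pair ht, sum_congr rfl hrest, sum_const, nsmul_eq_mul,
    cast_card_compl_pair ht]
  simp [pinnedMatrix, ht, ht.symm]

theorem sum_pinnedMatrix_mul_pinnedMatrix_row_right (ht : t₁ ≠ t₂) :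
    ∑ j, pinnedMatrix a b c t₁ t₂ j * pinnedMatrix a b c t₂ j t₂
      = b * b + b * a + ((Fintype.card ι : R) - 2) * (c * b) := by
  have hrest : ∀ j ∈ ({t₁, t₂}ᶜ : Finset ι),
      pinnedMatrix a b c t₁ t₂ j * pinnedMatrix a b c t₂ j t₂ = c * b := by
    intro j hj
    obtain ⟨hj₁, hj₂⟩ := mem_compl_pair.1 hj
    simp [pinnedMatrix, hj₁, hj₂, Ne.symm hj₂, ht.symm]
  rw [sum_univ_eq_add_add_sum_compl_pair ht, sum_congr rfl hrest, sum_const, nsmul_eq_mul,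
    cast_card_compl_pair ht]
  simp [pinnedMatrix, ht, ht.symm]

theorem sum_pinnedMatrix_mul_pinnedMatrix_row_compl (ht : t₁ ≠ t₂) {i : ι}
    (hi : i ∈ ({t₁, t₂}ᶜ : Finset ι)) :
    ∑ j, pinnedMatrix a b c t₁ i j * pinnedMatrix a b c t₂ j i
      = b * c + c * b + (b * b + ((Fintype.card ι : R) - 3) * (c * c)) := by
  obtain ⟨hi₁, hi₂⟩ := mem_compl_pair.1 hi
  have hrest : ∀ j ∈ ({t₁, t₂}ᶜ : Finset ι),
      pinnedMatrix a b c t₁ i j * pinnedMatrix a b c t₂ j i = if i = j then b * b else c * c := by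
    intro j hj
    obtain ⟨hj₁, hj₂⟩ := mem_compl_pair.1 hj
    by_cases hij : i = j
    · subst hij; simp [pinnedMatrix, hi₁, hi₂]
    · simp [pinnedMatrix, hij, Ne.symm hij, hi₁, hi₂, hj₁, hj₂]
  rw [sum_univ_eq_add_add_sum_compl_pair ht, sum_congr rfl hrest, sum_compl_pair_ite_eq ht hi]
  simp [pinnedMatrix, ht, ht.symm, hi₁, hi₂, Ne.symm hi₁, Ne.symm hi₂]

theorem trace_pinnedMatrix_mul_pinnedMatrix (ht : t₁ ≠ t₂) :
    (pinnedMatrix a b c t₁ * pinnedMatrix a b c t₂).trace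
      = 2 * a * b + (Fintype.card ι : R) * b ^ 2 + 4 * ((Fintype.card ι : R) - 2) * b * c
        + ((Fintype.card ι : R) - 2) * ((Fintype.card ι : R) - 3) * c ^ 2 := by
  simp only [Matrix.trace, Matrix.diag, Matrix.mul_apply]
  rw [sum_univ_eq_add_add_sum_compl_pair ht, sum_pinnedMatrix_mul_pinnedMatrix_row_left ht,
    sum_pinnedMatrix_mul_pinnedMatrix_row_right ht,
    sum_congr rfl fun i hi => sum_pinnedMatrix_mul_pinnedMatrix_row_compl ht hi, sum_const,
    nsmul_eq_mul, cast_card_compl_pair ht]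
  ring

end PinnedMatrix

theorem stmt_19_general (κ : ℕ) (a b c : ℂ) (t₁ t₂ : Fin κ) (ht : t₁ ≠ t₂)
    (M : Fin κ → Matrix (Fin κ) (Fin κ) ℂ)
    (hM : ∀ t i j, M t i j =
      if i = j ∧ j = t then a
      else if i = j ∨ (i = t ∨ j = t) then b
      else c) :
    Matrix.trace (M t₁ * M t₂)
      = 2 * a * b + (κ : ℂ) * b ^ 2 + 4 * ((κ : ℂ) - 2) * b * c
        + ((κ : ℂ) - 2) * ((κ : ℂ) - 3) * c ^ 2 := by
  obtain rfl : M = pinnedMatrix a b c := funext fun t => Matrix.ext (hM t)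
  simpa using trace_pinnedMatrix_mul_pinnedMatrix ht

theorem stmt_19 (κ : ℕ) (hκ : 3 ≤ κ) (a b c : ℂ) (t₁ t₂ : Fin κ) (ht : t₁ ≠ t₂)
    (M : Fin κ → Matrix (Fin κ) (Fin κ) ℂ)
    (hM : ∀ t i j, M t i j =
      if i = j ∧ j = t then a
      else if i = j ∨ (i = t ∨ j = t) then b
      else c) :
    Matrix.trace (M t₁ * M t₂)
      = 2 * a * b + (κ : ℂ) * b ^ 2 + 4 * ((κ : ℂ) - 2) * b * c
        + ((κ : ℂ) - 2) * ((κ : ℂ) - 3) * c ^ 2 :=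
  stmt_19_general κ a b c t₁ t₂ ht M hM
end
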